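/- Self-attention f with parameters (A, V) is Lipschitz on B_R^n (with the Frobenius norm) with Lip(f|_{B_R^n}) ≤ √3 ‖V‖₂ (‖A‖₂² R⁴ (4n + 1) + n)^{1/2}. -/

import Mathlib

/-!
Row `i` of `f X - f Y` is `V` applied to `∑ p_j x_j - ∑ r_j y_j`, where `p` and `r` are the
softmax vectors of the scores `x_i ⬝ A x_j` and `y_i ⬝ A y_j`. Passing through the softmax vector `q`
of the mixed scores `x_i ⬝ A y_j` splits this into `∑ p_j (x_j - y_j)`, of norm at most `‖X - Y‖`,
and two terms of norm at most `R ‖p - q‖₁` and `R ‖q - r‖₁`. The `ℓ¹` distance of two softmax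
vectors is at most the oscillation of the score difference, hence at most `√2` times its `ℓ²`
norm, and by bilinearity the score differences are bounded by `‖A‖₂ R ‖x_j - y_j‖` and
`‖A‖₂ R ‖x_i - y_i‖` respectively. Squaring with `(a + b + c)² ≤ 3 (a² + b² + c²)` and summing
over the rows gives the constant.
-/

open Matrix

/-- Self-attention as a map between sequence spaces equipped with the Frobenius norm. -/
noncomputable def attnF (n d k : ℕ) (A : Matrix (Fin d) (Fin d) ℝ)
    (V : Matrix (Fin k) (Fin d) ℝ) :
    PiLp 2 (fun _ : Fin n => EuclideanSpace ℝ (Fin d)) →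
      PiLp 2 (fun _ : Fin n => EuclideanSpace ℝ (Fin k)) :=
  fun x => WithLp.toLp 2 (fun i => WithLp.toLp 2 (V.mulVec (∑ j, (Real.exp ((x i) ⬝ᵥ (Aᵀ.mulVec (x j))) /
      ∑ l, Real.exp ((x i) ⬝ᵥ (Aᵀ.mulVec (x l)))) • x j)))

/-- Spectral norm of a matrix, as the operator norm of the induced map between
Euclidean spaces. -/
noncomputable def spec {a b : ℕ} (M : Matrix (Fin a) (Fin b) ℝ) : ℝ :=
  ‖LinearMap.toContinuousLinearMap (Matrix.toEuclideanLin M)‖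

open Finset Real

lemma abs_exp_sub_one_le {t u v : ℝ} (htu : t ≤ u) (hvt : -v ≤ t) (hu : 0 ≤ u) (hv : 0 ≤ v) :
    |exp t - 1| ≤ exp t * u + v := by
  rcases le_total 0 t with ht | ht
  · have h := mul_le_mul_of_nonneg_left (add_one_le_exp (-t)) (exp_pos t).le
    rw [← exp_add, add_neg_cancel, exp_zero] at h
    rw [abs_of_nonneg (by linarith [one_le_exp ht])]
    nlinarith [exp_pos t]
  · rw [abs_of_nonpos (by linarith [exp_le_one_iff.2 ht])]
    nlinarith [add_one_le_exp t, exp_pos t]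

noncomputable def softmax {ι : Type*} [Fintype ι] (a : ι → ℝ) (j : ι) : ℝ :=
  exp (a j) / ∑ l, exp (a l)

section Softmax

variable {ι : Type*} [Fintype ι]

lemma sum_exp_pos [Nonempty ι] (a : ι → ℝ) : 0 < ∑ l, exp (a l) :=
  sum_pos (fun _ _ => exp_pos _) univ_nonempty

lemma softmax_nonneg [Nonempty ι] (a : ι → ℝ) (j : ι) : 0 ≤ softmax a j :=
  div_nonneg (exp_pos _).le (sum_exp_pos a).le

lemma sum_softmax [Nonempty ι] (a : ι → ℝ) : ∑ j, softmax a j = 1 := by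
  simp only [softmax]
  rw [← sum_div, div_self (sum_exp_pos a).ne']

lemma sum_exp_le_exp_mul_sum_exp {a b : ι → ℝ} {M : ℝ} (h : ∀ j, a j ≤ M + b j) :
    ∑ j, exp (a j) ≤ exp M * ∑ j, exp (b j) := by
  rw [mul_sum]
  exact sum_le_sum fun j _ => (exp_le_exp.2 (h j)).trans_eq (exp_add _ _)

lemma softmax_eq_mul_exp [Nonempty ι] (a b : ι → ℝ) (j : ι) :
    softmax a j = softmax b j *
      exp (a j - b j - log ((∑ l, exp (a l)) / ∑ l, exp (b l))) := by
  rw [exp_sub, exp_log (div_pos (sum_exp_pos a) (sum_exp_pos b)), exp_sub, softmax, softmax]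
  field_simp

lemma sum_abs_softmax_sub_le [Nonempty ι] {a b : ι → ℝ} {m M : ℝ} (hm : ∀ j, m ≤ a j - b j)
    (hM : ∀ j, a j - b j ≤ M) : ∑ j, |softmax a j - softmax b j| ≤ M - m := by
  set c := log ((∑ l, exp (a l)) / ∑ l, exp (b l))
  have hZ := div_pos (sum_exp_pos a) (sum_exp_pos b)
  have hcM : c ≤ M := by
    rw [log_le_iff_le_exp hZ, div_le_iff₀ (sum_exp_pos b)]
    exact sum_exp_le_exp_mul_sum_exp fun j => by linarith [hM j]
  have hmc : m ≤ c := by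
    rw [le_log_iff_exp_le hZ, le_div_iff₀ (sum_exp_pos b), ← le_div_iff₀' (exp_pos m),
      div_eq_mul_inv, ← exp_neg, mul_comm]
    exact sum_exp_le_exp_mul_sum_exp fun j => by linarith [hm j]
  -- `softmax a j = softmax b j * exp t` with `m - c ≤ t ≤ M - c`
  calc ∑ j, |softmax a j - softmax b j|
      ≤ ∑ j, (softmax a j * (M - c) + softmax b j * (c - m)) := by
        refine sum_le_sum fun j _ => ?_
        rw [softmax_eq_mul_exp a b j, ← mul_sub_one, abs_mul, abs_of_nonneg (softmax_nonneg b j),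
          mul_assoc, ← mul_add]
        exact mul_le_mul_of_nonneg_left (abs_exp_sub_one_le (by linarith [hM j])
          (by linarith [hm j]) (by linarith) (by linarith)) (softmax_nonneg b j)
    _ = M - m := by
        rw [sum_add_distrib, ← sum_mul, ← sum_mul, sum_softmax, sum_softmax]
        ring

lemma sq_sum_abs_softmax_sub_le [Nonempty ι] (a b : ι → ℝ) :
    (∑ j, |softmax a j - softmax b j|) ^ 2 ≤ 2 * ∑ j, (a j - b j) ^ 2 := by
  obtain ⟨jM, hjM⟩ := Finite.exists_max fun j => a j - b j
  obtain ⟨jm, hjm⟩ := Finite.exists_min fun j => a j - b j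
  have hpair : (a jM - b jM - (a jm - b jm)) ^ 2 ≤ 2 * ∑ j, (a j - b j) ^ 2 := by
    rcases eq_or_ne jM jm with h | h
    · rw [h, sub_self, zero_pow two_ne_zero]; positivity
    · classical
      have := sum_le_sum_of_subset_of_nonneg (subset_univ {jM, jm})
        fun j _ _ => sq_nonneg (a j - b j)
      rw [sum_pair h] at this
      nlinarith [sq_nonneg (a jM - b jM + (a jm - b jm))]
  exact (pow_le_pow_left₀ (sum_nonneg fun _ _ => abs_nonneg _)
    (sum_abs_softmax_sub_le hjm hjM) 2).trans hpair

end Softmax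

lemma norm_sum_smul_le_of_norm_le {ι E : Type*} [Fintype ι] [SeminormedAddCommGroup E]
    [NormedSpace ℝ E] (w : ι → ℝ) {y : ι → E} {R : ℝ} (hy : ∀ j, ‖y j‖ ≤ R) :
    ‖∑ j, w j • y j‖ ≤ (∑ j, |w j|) * R := by
  rw [sum_mul]
  refine (norm_sum_le _ _).trans (sum_le_sum fun j _ => ?_)
  rw [norm_smul, Real.norm_eq_abs]
  exact mul_le_mul_of_nonneg_left (hy j) (abs_nonneg _)

lemma norm_sum_softmax_smul_sub_le {ι E : Type*} [Fintype ι] [Nonempty ι]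
    [SeminormedAddCommGroup E] [NormedSpace ℝ E] (a b c : ι → ℝ) {x y : ι → E} {D R : ℝ}
    (hxy : ∀ j, ‖x j - y j‖ ≤ D) (hy : ∀ j, ‖y j‖ ≤ R) :
    ‖∑ j, softmax a j • x j - ∑ j, softmax c j • y j‖ ≤
      D + (∑ j, |softmax a j - softmax b j|) * R + (∑ j, |softmax b j - softmax c j|) * R := by
  have hsplit : ∑ j, softmax a j • x j - ∑ j, softmax c j • y j =
      ∑ j, softmax a j • (x j - y j) + ∑ j, (softmax a j - softmax b j) • y j +
        ∑ j, (softmax b j - softmax c j) • y j := by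
    simp only [← sum_add_distrib, ← sum_sub_distrib, smul_sub, sub_smul]
    exact sum_congr rfl fun j _ => by abel
  have hconv : ‖∑ j, softmax a j • (x j - y j)‖ ≤ D := by
    have h := norm_sum_smul_le_of_norm_le (softmax a) hxy
    simpa only [abs_of_nonneg (softmax_nonneg a _), sum_softmax, one_mul] using h
  rw [hsplit]
  refine (norm_add_le _ _).trans (add_le_add ((norm_add_le _ _).trans (add_le_add hconv ?_)) ?_)
  · exact norm_sum_smul_le_of_norm_le _ hy
  · exact norm_sum_smul_le_of_norm_le _ hy

section Spec

variable {a b : ℕ}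

lemma spec_nonneg (M : Matrix (Fin a) (Fin b) ℝ) : 0 ≤ spec M := norm_nonneg _

lemma norm_toEuclideanLin_le (M : Matrix (Fin a) (Fin b) ℝ) (v : EuclideanSpace ℝ (Fin b)) :
    ‖toEuclideanLin M v‖ ≤ spec M * ‖v‖ :=
  (toEuclideanLin M).toContinuousLinearMap.le_opNorm v

lemma sq_dotProduct_transpose_mulVec_le (M : Matrix (Fin a) (Fin a) ℝ)
    (u w : EuclideanSpace ℝ (Fin a)) :
    (u ⬝ᵥ Mᵀ *ᵥ w) ^ 2 ≤ spec M ^ 2 * ‖u‖ ^ 2 * ‖w‖ ^ 2 := by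
  have h : u ⬝ᵥ Mᵀ *ᵥ w = inner ℝ w (toEuclideanLin M u) := by
    rw [EuclideanSpace.inner_eq_star_dotProduct, star_trivial, dotProduct_mulVec,
      vecMul_transpose]
    rfl
  calc (u ⬝ᵥ Mᵀ *ᵥ w) ^ 2 = |inner ℝ w (toEuclideanLin M u)| ^ 2 := by rw [h, sq_abs]
    _ ≤ (‖w‖ * (spec M * ‖u‖)) ^ 2 := by
        gcongr
        exact (abs_real_inner_le_norm _ _).trans
          (mul_le_mul_of_nonneg_left (norm_toEuclideanLin_le M u) (norm_nonneg _))
    _ = spec M ^ 2 * ‖u‖ ^ 2 * ‖w‖ ^ 2 := by ring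

end Spec

lemma attnF_apply {n d k : ℕ} (A : Matrix (Fin d) (Fin d) ℝ) (V : Matrix (Fin k) (Fin d) ℝ)
    (X : PiLp 2 (fun _ : Fin n => EuclideanSpace ℝ (Fin d))) (i : Fin n) :
    attnF n d k A V X i =
      toEuclideanLin V (∑ j, softmax (fun l => X i ⬝ᵥ Aᵀ *ᵥ X l) j • X j) := by
  rw [toLpLin_apply]
  simp [attnF, softmax, WithLp.ofLp_sum]

section Attention

variable {n d k : ℕ} (A : Matrix (Fin d) (Fin d) ℝ) (V : Matrix (Fin k) (Fin d) ℝ)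
  {X Y : PiLp 2 (fun _ : Fin n => EuclideanSpace ℝ (Fin d))} {R : ℝ}

lemma norm_attnF_sub_apply_sq_le (hX : ∀ i, ‖X i‖ ≤ R) (hY : ∀ i, ‖Y i‖ ≤ R) (i : Fin n) :
    ‖(attnF n d k A V X - attnF n d k A V Y) i‖ ^ 2 ≤
      3 * spec V ^ 2 * ((1 + 2 * spec A ^ 2 * R ^ 4) * ‖X - Y‖ ^ 2 +
        2 * n * spec A ^ 2 * R ^ 4 * ‖X i - Y i‖ ^ 2) := by
  have : Nonempty (Fin n) := ⟨i⟩
  set sXX : Fin n → ℝ := fun l => X i ⬝ᵥ Aᵀ *ᵥ X l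
  set sXY : Fin n → ℝ := fun l => X i ⬝ᵥ Aᵀ *ᵥ Y l
  set sYY : Fin n → ℝ := fun l => Y i ⬝ᵥ Aᵀ *ᵥ Y l
  set S₁ := ∑ j, |softmax sXX j - softmax sXY j|
  set S₂ := ∑ j, |softmax sXY j - softmax sYY j|
  have hrow : ‖(attnF n d k A V X - attnF n d k A V Y) i‖ ≤
      spec V * (‖X - Y‖ + S₁ * R + S₂ * R) := by
    rw [PiLp.sub_apply, attnF_apply, attnF_apply, ← map_sub]
    exact (norm_toEuclideanLin_le V _).trans (mul_le_mul_of_nonneg_left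
      (norm_sum_softmax_smul_sub_le sXX sXY sYY (PiLp.norm_apply_le (X - Y)) hY)
      (spec_nonneg V))
  have hS₁ : S₁ ^ 2 ≤ 2 * (spec A ^ 2 * R ^ 2 * ‖X - Y‖ ^ 2) := by
    refine (sq_sum_abs_softmax_sub_le sXX sXY).trans (mul_le_mul_of_nonneg_left ?_ two_pos.le)
    rw [PiLp.norm_sq_eq_of_L2, mul_sum]
    refine sum_le_sum fun j _ => ?_
    calc (sXX j - sXY j) ^ 2 = (X i ⬝ᵥ Aᵀ *ᵥ (X - Y) j) ^ 2 := by
          simp [sXX, sXY, mulVec_sub, dotProduct_sub]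
      _ ≤ spec A ^ 2 * ‖X i‖ ^ 2 * ‖(X - Y) j‖ ^ 2 := sq_dotProduct_transpose_mulVec_le A _ _
      _ ≤ spec A ^ 2 * R ^ 2 * ‖(X - Y) j‖ ^ 2 := by gcongr; exact hX i
  have hS₂ : S₂ ^ 2 ≤ 2 * (n * (spec A ^ 2 * R ^ 2 * ‖X i - Y i‖ ^ 2)) := by
    refine (sq_sum_abs_softmax_sub_le sXY sYY).trans (mul_le_mul_of_nonneg_left ?_ two_pos.le)
    refine (sum_le_card_nsmul univ _ (spec A ^ 2 * R ^ 2 * ‖X i - Y i‖ ^ 2) fun j _ => ?_).trans_eq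
      (by simp)
    calc (sXY j - sYY j) ^ 2 = ((X i - Y i) ⬝ᵥ Aᵀ *ᵥ Y j) ^ 2 := by
          simp [sXY, sYY, sub_dotProduct]
      _ ≤ spec A ^ 2 * ‖X i - Y i‖ ^ 2 * ‖Y j‖ ^ 2 := sq_dotProduct_transpose_mulVec_le A _ _
      _ ≤ spec A ^ 2 * R ^ 2 * ‖X i - Y i‖ ^ 2 := by
          rw [mul_right_comm]; gcongr; exact hY j
  have hsum : (‖X - Y‖ + S₁ * R + S₂ * R) ^ 2 ≤
      3 * (‖X - Y‖ ^ 2 + S₁ ^ 2 * R ^ 2 + S₂ ^ 2 * R ^ 2) := by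
    nlinarith [sq_nonneg (‖X - Y‖ - S₁ * R), sq_nonneg (‖X - Y‖ - S₂ * R),
      sq_nonneg (S₁ * R - S₂ * R)]
  calc ‖(attnF n d k A V X - attnF n d k A V Y) i‖ ^ 2
      ≤ spec V ^ 2 * (‖X - Y‖ + S₁ * R + S₂ * R) ^ 2 := by
        rw [← mul_pow]; exact pow_le_pow_left₀ (norm_nonneg _) hrow 2
    _ ≤ spec V ^ 2 * (3 * (‖X - Y‖ ^ 2 + S₁ ^ 2 * R ^ 2 + S₂ ^ 2 * R ^ 2)) := by gcongr
    _ = 3 * spec V ^ 2 * (‖X - Y‖ ^ 2 + S₁ ^ 2 * R ^ 2 + S₂ ^ 2 * R ^ 2) := by ring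
    _ ≤ _ := by
        refine mul_le_mul_of_nonneg_left ?_ (by positivity)
        nlinarith [mul_le_mul_of_nonneg_right hS₁ (sq_nonneg R),
          mul_le_mul_of_nonneg_right hS₂ (sq_nonneg R)]

end Attention

theorem attn_lipschitz_on_ball_general {n d k : ℕ} (R : ℝ)
    (A : Matrix (Fin d) (Fin d) ℝ) (V : Matrix (Fin k) (Fin d) ℝ)
    (X Y : PiLp 2 (fun _ : Fin n => EuclideanSpace ℝ (Fin d)))
    (hX : ∀ i, ‖X i‖ ≤ R) (hY : ∀ i, ‖Y i‖ ≤ R) :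
    ‖attnF n d k A V X - attnF n d k A V Y‖ ≤
      Real.sqrt 3 * spec V *
        Real.sqrt (spec A ^ 2 * R ^ 4 * (4 * n + 1) + n) * ‖X - Y‖ := by
  have hrows := sum_le_sum fun i (_ : i ∈ univ) => norm_attnF_sub_apply_sq_le A V hX hY i
  have hD : ∑ i, ‖X i - Y i‖ ^ 2 = ‖X - Y‖ ^ 2 := by simp [PiLp.norm_sq_eq_of_L2]
  rw [← PiLp.norm_sq_eq_of_L2, ← mul_sum, sum_add_distrib, sum_const, card_univ,
    Fintype.card_fin, nsmul_eq_mul, ← mul_sum, hD] at hrows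
  refine le_of_pow_le_pow_left₀ two_ne_zero
    (by have := spec_nonneg V; positivity) ?_
  rw [mul_pow, mul_pow, mul_pow, sq_sqrt (by norm_num), sq_sqrt (by positivity)]
  refine hrows.trans (sub_nonneg.1 ?_)
  ring_nf
  positivity

/-- `Lip(f|_{B_R^n}) ≤ √3 ‖V‖₂ (‖A‖₂² R⁴ (4n + 1) + n)^{1/2}`. -/
theorem attn_lipschitz_on_ball {n d k : ℕ} (R : ℝ) (hR : 0 < R)
    (A : Matrix (Fin d) (Fin d) ℝ) (V : Matrix (Fin k) (Fin d) ℝ)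
    (X Y : PiLp 2 (fun _ : Fin n => EuclideanSpace ℝ (Fin d)))
    (hX : ∀ i, ‖X i‖ ≤ R) (hY : ∀ i, ‖Y i‖ ≤ R) :
    ‖attnF n d k A V X - attnF n d k A V Y‖ ≤
      Real.sqrt 3 * spec V *
        Real.sqrt (spec A ^ 2 * R ^ 4 * (4 * n + 1) + n) * ‖X - Y‖ :=
  attn_lipschitz_on_ball_general R A V X Y hX hY
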